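/- Let Λ > 1, m ≥ 3, let P be an attainability distribution with full support satisfying p_1 = P(A_1 = 1) < (1 − 1/Λ)/2, and fix cardinal utilities v_2 > v_3 > ⋯ > v_m for schools 2,…,m. Then there exists v̄ > v_2 such that for every choice of v_1 ≥ v̄, every optimal ROL ranks school 1 after school m (i.e., school 1 is effectively dropped from the list). -/

import Mathlib

open Finset

/-- An attainability distribution over states `A : Fin (m+2) → Bool`:
nonnegative, sums to one, and the outside option (school `m+2`, the last one)
is always attainable. -/
def IsAttDist {m : ℕ} (P : (Fin (m + 2) → Bool) → ℝ) : Prop :=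
  (∀ A, 0 ≤ P A) ∧ (∑ A : Fin (m + 2) → Bool, P A = 1) ∧
    ∀ A : Fin (m + 2) → Bool, A (Fin.last (m + 1)) = false → P A = 0

/-- Full support: every state in which the outside option is attainable has
strictly positive probability. -/
def FullSupport {m : ℕ} (P : (Fin (m + 2) → Bool) → ℝ) : Prop :=
  ∀ A : Fin (m + 2) → Bool, A (Fin.last (m + 1)) = true → 0 < P A

/-- Match probability of school `s` under ROL `ρ` (where `ρ k` is the school
ranked in position `k`): the probability that `s` is attainable and no school
ranked before `s` is attainable. -/
def matchProb {m : ℕ} (P : (Fin (m + 2) → Bool) → ℝ)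
    (ρ : Equiv.Perm (Fin (m + 2))) (s : Fin (m + 2)) : ℝ :=
  ∑ A : Fin (m + 2) → Bool,
    if A s = true ∧ ∀ ℓ, ℓ < ρ.symm s → A (ρ ℓ) = false then P A else 0

/-- Reference-dependent expected utility of a lottery `f` with loss dominance `Λ`. -/
def utility {m : ℕ} (Λ : ℝ) (v f : Fin (m + 2) → ℝ) : ℝ :=
  (∑ s, f s * v s) -
    Λ * ∑ s, ∑ r ∈ Finset.univ.filter (fun r => s < r), f s * f r * (v s - v r)

/-- An ROL is strictly optimal if its utility strictly exceeds that of every ROL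
inducing a different vector of match probabilities. -/
def StrictlyOptimal {m : ℕ} (Λ : ℝ) (v : Fin (m + 2) → ℝ)
    (P : (Fin (m + 2) → Bool) → ℝ) (ρ : Equiv.Perm (Fin (m + 2))) : Prop :=
  ∀ ρ' : Equiv.Perm (Fin (m + 2)), matchProb P ρ' ≠ matchProb P ρ →
    utility Λ v (matchProb P ρ') < utility Λ v (matchProb P ρ)

/-- An ROL is (weakly) optimal if its utility is weakly greater than that of
every other ROL. -/
def Optimal {m : ℕ} (Λ : ℝ) (v : Fin (m + 2) → ℝ)
    (P : (Fin (m + 2) → Bool) → ℝ) (ρ : Equiv.Perm (Fin (m + 2))) : Prop :=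
  ∀ ρ' : Equiv.Perm (Fin (m + 2)),
    utility Λ v (matchProb P ρ') ≤ utility Λ v (matchProb P ρ)

/-- Top-rank monotonicity of an ROL `ρ` (`ρ k` = school at rank `k`; lower
school label = more preferred). -/
def TopRankMonotone {m : ℕ} (ρ : Equiv.Perm (Fin (m + 2))) : Prop :=
  (∀ k i : Fin (m + 2), ρ k < ρ 0 → ρ i < ρ k → k < i) ∧
    ∀ l j : Fin (m + 2), ρ 0 < ρ l → ρ j < ρ l → j < l
/-! If school `0` (the paper's school 1) is listed before the outside option, its match
probability `f₀` is at least `ε = P(only school 0 and the outside option are attainable) > 0`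
and at most `p₁`. The utility is affine in `v₁` with slope `f₀ (1 - Λ (1 - f₀))`, which
`f₀ < (1 - 1/Λ)/2` pushes below `-ε (Λ - 1)/2`. So for large `v₁` such a list is worse than
the list swapping school `0` with the outside option, whose utility does not depend on `v₁`. -/

theorem Finset.sum_ite_first_true {α M : Type*} [Fintype α] [LinearOrder α] [AddCommMonoid M]
    (B : α → Bool) (hB : ∃ k, B k = true) (x : M) :
    ∑ k, (if B k = true ∧ ∀ ℓ < k, B ℓ = false then x else 0) = x := by
  obtain ⟨k₀, hk₀, hmin⟩ := wellFounded_lt.has_min {k | B k = true} hB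
  have hfirst : B k₀ = true ∧ ∀ ℓ < k₀, B ℓ = false :=
    ⟨hk₀, fun ℓ hℓ => Bool.eq_false_iff.2 fun h => hmin ℓ h hℓ⟩
  rw [Finset.sum_eq_single k₀ (fun k _ hne => if_neg ?_) (by simp), if_pos hfirst]
  rintro ⟨hk, hbefore⟩
  exact Bool.false_ne_true ((hbefore k₀ ((not_lt.1 (hmin k hk)).lt_of_ne' hne)).symm.trans hk₀)

section MatchProb

variable {n : ℕ} {P : (Fin (n + 2) → Bool) → ℝ}

theorem sum_matchProb (hP : IsAttDist P) (ρ : Equiv.Perm (Fin (n + 2))) :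
    ∑ s, matchProb P ρ s = 1 := by
  unfold matchProb
  rw [Finset.sum_comm, ← hP.2.1]
  refine Finset.sum_congr rfl fun A _ => ?_
  by_cases hA : A (Fin.last (n + 1)) = true
  · rw [← Equiv.sum_comp ρ]
    simp only [Equiv.symm_apply_apply]
    convert Finset.sum_ite_first_true (A ∘ ρ) ⟨ρ.symm _, by simpa using hA⟩ (P A) <;> rfl
  · simp [hP.2.2 A (by simpa using hA)]

theorem matchProb_le_prob_attainable (hP : IsAttDist P) (ρ : Equiv.Perm (Fin (n + 2)))
    (s : Fin (n + 2)) :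
    matchProb P ρ s ≤ ∑ A : Fin (n + 2) → Bool, if A s = true then P A else 0 :=
  Finset.sum_le_sum fun A _ => by
    split_ifs <;> simp_all [hP.1 A]

theorem matchProb_eq_zero_of_outside_first (hP : IsAttDist P) {ρ : Equiv.Perm (Fin (n + 2))}
    {s : Fin (n + 2)} (hρ : ρ.symm (Fin.last (n + 1)) < ρ.symm s) : matchProb P ρ s = 0 :=
  Finset.sum_eq_zero fun A _ => by
    split_ifs with h
    · exact hP.2.2 A (by simpa using h.2 _ hρ)
    · rfl

def onlyAttainable (s : Fin (n + 2)) : Fin (n + 2) → Bool :=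
  fun i => decide (i = s ∨ i = Fin.last (n + 1))

theorem prob_onlyAttainable_le_matchProb (hP : IsAttDist P) {ρ : Equiv.Perm (Fin (n + 2))}
    {s : Fin (n + 2)} (hρ : ρ.symm s < ρ.symm (Fin.last (n + 1))) :
    P (onlyAttainable s) ≤ matchProb P ρ s := by
  have hmatch : onlyAttainable s s = true ∧
      ∀ ℓ < ρ.symm s, onlyAttainable s (ρ ℓ) = false := by
    refine ⟨by simp [onlyAttainable], fun ℓ hℓ => ?_⟩
    simp only [onlyAttainable, decide_eq_false_iff_not, not_or, ← Equiv.eq_symm_apply]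
    exact ⟨hℓ.ne, (hℓ.trans hρ).ne⟩
  unfold matchProb
  refine (le_of_eq ?_).trans
    (Finset.single_le_sum (fun A _ => ?_) (Finset.mem_univ (onlyAttainable s)))
  · exact (if_pos hmatch).symm
  · split_ifs <;> simp [hP.1 A]

end MatchProb

section Utility

variable {n : ℕ}

theorem utility_add (Λ : ℝ) (v v' f : Fin (n + 2) → ℝ) :
    utility Λ (v + v') f = utility Λ v f + utility Λ v' f := by
  simp only [utility, Pi.add_apply, add_sub_add_comm, mul_add, Finset.sum_add_distrib]

theorem utility_single_zero (Λ a : ℝ) {f : Fin (n + 2) → ℝ} (hf : ∑ s, f s = 1) :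
    utility Λ (Pi.single 0 a) f = a * f 0 * (1 - Λ * (1 - f 0)) := by
  have htail : ∑ r ∈ Finset.univ.filter (fun r => (0 : Fin (n + 2)) < r), f r = 1 - f 0 := by
    rw [← hf, ← Finset.sum_erase_eq_sub (Finset.mem_univ 0)]
    congr 1
    ext r
    simp [Fin.pos_iff_ne_zero]
  have hinner : ∀ s : Fin (n + 2), ∑ r ∈ Finset.univ.filter (fun r => s < r),
      f s * f r *
          ((Pi.single 0 a : Fin (n + 2) → ℝ) s - (Pi.single 0 a : Fin (n + 2) → ℝ) r) =
        if s = 0 then a * f 0 * (1 - f 0) else 0 := by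
    intro s
    rcases eq_or_ne s 0 with rfl | hs
    · rw [if_pos rfl, ← htail, Finset.mul_sum]
      refine Finset.sum_congr rfl fun r hr => ?_
      simp [(Finset.mem_filter.1 hr).2.ne']
      ring
    · rw [if_neg hs]
      refine Finset.sum_eq_zero fun r hr => ?_
      simp [hs, ((Fin.zero_le s).trans_lt (Finset.mem_filter.1 hr).2).ne']
  simp only [utility, hinner]
  simp [Pi.single_apply]
  ring

theorem utility_update_zero (Λ a : ℝ) (w : Fin (n + 2) → ℝ) {f : Fin (n + 2) → ℝ}
    (hf : ∑ s, f s = 1) :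
    utility Λ (Function.update w 0 a) f =
      utility Λ (Function.update w 0 0) f + a * f 0 * (1 - Λ * (1 - f 0)) := by
  rw [← utility_single_zero Λ a hf, ← utility_add]
  congr 1
  ext i
  rcases eq_or_ne i 0 with rfl | hi <;> simp [*]

end Utility

theorem mul_one_sub_mul_one_sub_le_of_lt_half {Λ ε x : ℝ} (hΛ : 1 < Λ) (hε : 0 ≤ ε)
    (hεx : ε ≤ x) (hx : x < (1 - 1 / Λ) / 2) :
    x * (1 - Λ * (1 - x)) ≤ -(ε * (Λ - 1) / 2) := by
  have hneg : 1 - Λ * (1 - x) ≤ -((Λ - 1) / 2) := by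
    have := mul_lt_mul_of_pos_left hx (zero_lt_one.trans hΛ)
    rw [mul_div_assoc', mul_sub, mul_one_div_cancel (zero_lt_one.trans hΛ).ne'] at this
    linarith
  calc x * (1 - Λ * (1 - x)) ≤ ε * (1 - Λ * (1 - x)) :=
        mul_le_mul_of_nonpos_right hεx (hneg.trans (by linarith))
    _ ≤ ε * -((Λ - 1) / 2) := mul_le_mul_of_nonneg_left hneg hε
    _ = -(ε * (Λ - 1) / 2) := by ring

theorem stmt_16_general (m : ℕ) (Λ : ℝ) (hΛ : 1 < Λ)
    (P : (Fin (m + 1 + 2) → Bool) → ℝ) (hP : IsAttDist P) (hfull : FullSupport P)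
    (hp1 : (∑ A : Fin (m + 1 + 2) → Bool, if A 0 = true then P A else 0) <
      (1 - 1 / Λ) / 2)
    (w : Fin (m + 1 + 2) → ℝ) :
    ∃ vbar : ℝ, w 1 < vbar ∧
      ∀ v1 : ℝ, vbar ≤ v1 →
        ∀ ρ : Equiv.Perm (Fin (m + 1 + 2)),
          Optimal Λ (Function.update w 0 v1) P ρ →
            ρ.symm (Fin.last (m + 1 + 1)) < ρ.symm 0 := by
  set σ := Equiv.swap 0 (Fin.last (m + 1 + 1))
  obtain ⟨M, hM⟩ :=
    (Set.finite_range fun ρ => utility Λ (Function.update w 0 0) (matchProb P ρ)).bddAbove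
  set C := utility Λ (Function.update w 0 0) (matchProb P σ)
  set ε := P (onlyAttainable 0)
  have hε : 0 < ε := hfull _ (by simp [onlyAttainable])
  set c := ε * (Λ - 1) / 2
  have hc : 0 < c := by have := sub_pos.2 hΛ; positivity
  refine ⟨max (w 1 + 1) ((M - C) / c + 1), (lt_add_one _).trans_le (le_max_left _ _),
    fun v hv ρ hopt => ?_⟩
  replace hv : (M - C) / c + 1 ≤ v := (le_max_right _ _).trans hv
  have hCM : C ≤ M := hM ⟨σ, rfl⟩
  have hv₀ : 0 ≤ v := le_trans (by positivity) hv
  by_contra! hbefore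
  replace hbefore := hbefore.lt_of_ne (ρ.symm.injective.ne Fin.last_pos.ne)
  have hdrop : utility Λ (Function.update w 0 v) (matchProb P σ) = C := by
    rw [utility_update_zero _ _ _ (sum_matchProb hP σ),
      matchProb_eq_zero_of_outside_first hP (by simp [σ, Fin.last_pos])]
    ring
  have hcoef : _ ≤ -c := mul_one_sub_mul_one_sub_le_of_lt_half hΛ hε.le
    (prob_onlyAttainable_le_matchProb hP hbefore)
    ((matchProb_le_prob_attainable hP ρ 0).trans_lt hp1)
  have hvc : M - C + c ≤ c * v := by
    simpa [mul_add, mul_div_cancel₀ _ hc.ne'] using mul_le_mul_of_nonneg_left hv hc.le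
  have hworse : utility Λ (Function.update w 0 v) (matchProb P ρ) ≤ M - c * v := by
    rw [utility_update_zero _ _ _ (sum_matchProb hP ρ), mul_assoc]
    linarith [hM ⟨ρ, rfl⟩, mul_le_mul_of_nonneg_left hcoef hv₀]
  linarith [hopt σ]

/-- with `Λ > 1`, at least three schools, a full-support
attainability distribution with `p₁ < (1 - 1/Λ)/2`, and fixed utilities
`v₂ > v₃ > ⋯ > v_m` for the remaining schools, there is a bound `v̄ > v₂` such
that whenever `v₁ ≥ v̄`, every optimal ROL ranks school 1 after the outside
option (school `m`, the last one), i.e. effectively drops school 1. -/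
theorem stmt_16 (m : ℕ) (Λ : ℝ) (hΛ : 1 < Λ)
    (P : (Fin (m + 1 + 2) → Bool) → ℝ) (hP : IsAttDist P) (hfull : FullSupport P)
    (hp1 : (∑ A : Fin (m + 1 + 2) → Bool, if A 0 = true then P A else 0) <
      (1 - 1 / Λ) / 2)
    (w : Fin (m + 1 + 2) → ℝ)
    (hw : ∀ i j : Fin (m + 1 + 2), 0 < i → i < j → w j < w i) :
    ∃ vbar : ℝ, w 1 < vbar ∧
      ∀ v1 : ℝ, vbar ≤ v1 →
        ∀ ρ : Equiv.Perm (Fin (m + 1 + 2)),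
          Optimal Λ (Function.update w 0 v1) P ρ →
            ρ.symm (Fin.last (m + 1 + 1)) < ρ.symm 0 :=
  stmt_16_general m Λ hΛ P hP hfull hp1 w
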